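/- Fix a prime p. Let A be a p-torsion-free commutative ring with a Frobenius lift φ and associated δ-operator δ, extended to A[1/p]. Let I ⊆ A be an ideal such that φ(I) ⊆ I and A/I is p-torsion free. Then the A-subalgebra of A[1/p] generated by { δ^i(x/p) : x ∈ I + pA, i ≥ 0 } is equal to the A-subalgebra of A[1/p] generated by { x^{p^m} / p^{1+p+⋯+p^m} : x ∈ I, m ≥ 0 }. -/

import Mathlib

/-!
Write `g x m = x^{p^m}/p^{1+p+⋯+p^m}`, so that `g x 0 = x/p` and `(g x m)^p = p · g x (m+1)`.
Since `φ` fixes `1/p`, the δ-operator acts on these elements by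
`δ (g x m) = g (φ x) m / p - g x (m+1)`, and `g (φ x) m / p` is built from
`(φ x)/p² = p^{p-2} (x/p)^p + δ(x)/p` by repeatedly raising to the `p`-th power and multiplying
by `p^{p-2}`. The hypotheses on `I` put `δ(x)` back in `I`, so the algebra generated by the
`g x m` is δ-stable (by the sum and product rules for δ), which gives one inclusion; the same
formula read as `g x (m+1) = g (φ x) m / p - δ (g x m)` gives the other by induction on `m`.
-/

open Finset

section DeltaOperator

variable {R : Type*} [CommRing R] {p : ℕ} (ψ : R →+* R) {δ : R → R}

theorem delta_mul (hpu : IsUnit (p : R)) (hδ : ∀ y, (p : R) * δ y = ψ y - y ^ p) (x y : R) :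
    δ (x * y) = x ^ p * δ y + y ^ p * δ x + p * δ x * δ y := by
  have hψ : ∀ y, ψ y = y ^ p + p * δ y := fun y => by linear_combination -hδ y
  refine hpu.mul_left_cancel ?_
  linear_combination hδ (x * y) + map_mul ψ x y + ψ y * hψ x + (x ^ p + p * δ x) * hψ y

theorem delta_add (hp : p.Prime) (hpu : IsUnit (p : R))
    (hδ : ∀ y, (p : R) * δ y = ψ y - y ^ p) (x y : R) :
    δ (x + y) = δ x + δ y -
      x * y * ∑ k ∈ Ioo 0 p, x ^ (k - 1) * y ^ (p - k - 1) * ((p.choose k / p : ℕ) : R) := by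
  have hψ : ∀ y, ψ y = y ^ p + p * δ y := fun y => by linear_combination -hδ y
  refine hpu.mul_left_cancel ?_
  linear_combination hδ (x + y) + map_add ψ x y + hψ x + hψ y - add_pow_prime_eq hp x y

variable {A : Type*} [CommRing A] [Algebra A R]

theorem mapsTo_delta_adjoin (hp : p.Prime) (hpu : IsUnit (p : R))
    (hδ : ∀ y, (p : R) * δ y = ψ y - y ^ p)
    (hδA : ∀ a : A, δ (algebraMap A R a) ∈ Set.range (algebraMap A R))
    {S : Set R} (hS : Set.MapsTo δ S (Algebra.adjoin A S)) :
    Set.MapsTo δ (Algebra.adjoin A S) (Algebra.adjoin A S) := by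
  intro y hy
  induction hy using Algebra.adjoin_induction with
  | mem x hx => exact hS hx
  | algebraMap a =>
      obtain ⟨b, hb⟩ := hδA a
      exact hb ▸ Subalgebra.algebraMap_mem _ b
  | add x y hx hy hδx hδy =>
      rw [delta_add ψ hp hpu hδ]
      exact sub_mem (add_mem hδx hδy) <| mul_mem (mul_mem hx hy) <| sum_mem fun k _ =>
        mul_mem (mul_mem (pow_mem hx _) (pow_mem hy _)) (natCast_mem _ _)
  | mul x y hx hy hδx hδy =>
      rw [delta_mul ψ hpu hδ]
      exact add_mem (add_mem (mul_mem (pow_mem hx p) hδy) (mul_mem (pow_mem hy p) hδx))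
        (mul_mem (mul_mem (natCast_mem _ _) hδx) hδy)

end DeltaOperator

section DivPow

variable {A R : Type*} [CommRing A] [CommRing R] [Algebra A R] {p : ℕ} {q : R}

/-- `x^{p^m} / p^{1+p+⋯+p^m}`, with `q` standing for `1/p`. -/
noncomputable def divPow (p : ℕ) (q : R) (x : A) (m : ℕ) : R :=
  algebraMap A R x ^ p ^ m * q ^ (∑ j ∈ range (m + 1), p ^ j)

theorem divPow_zero (x : A) : divPow p q x 0 = algebraMap A R x * q := by
  simp [divPow]

theorem divPow_pow (hq : (p : R) * q = 1) (x : A) (m : ℕ) :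
    divPow p q x m ^ p = p * divPow p q x (m + 1) := by
  have hsum : ∑ j ∈ range (m + 2), p ^ j = (∑ j ∈ range (m + 1), p ^ j) * p + 1 := by
    rw [sum_range_succ', sum_mul]
    simp [pow_succ]
  rw [divPow, divPow, hsum, mul_pow, ← pow_mul, ← pow_mul, ← pow_succ]
  linear_combination (-(algebraMap A R x ^ p ^ (m + 1) *
    q ^ ((∑ j ∈ range (m + 1), p ^ j) * p))) * hq

theorem mul_divPow_succ (hp : 2 ≤ p) (hq : (p : R) * q = 1) (x : A) (m : ℕ) :
    q * divPow p q x (m + 1) = p ^ (p - 2) * (q * divPow p q x m) ^ p := by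
  obtain ⟨k, rfl⟩ : ∃ k, p = k + 2 := ⟨p - 2, by omega⟩
  rw [mul_pow, divPow_pow hq, Nat.add_sub_cancel]
  have hunit : ((k + 2 : ℕ) : R) ^ (k + 1) * q ^ (k + 1) = 1 := by rw [← mul_pow, hq, one_pow]
  linear_combination (-(q * divPow (k + 2) q x (m + 1))) * hunit

theorem map_divPow (φ : A →+* A) (ψ : R →+* R)
    (hψ : ∀ a, ψ (algebraMap A R a) = algebraMap A R (φ a)) (hψq : ψ q = q) (x : A) (m : ℕ) :
    ψ (divPow p q x m) = divPow p q (φ x) m := by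
  simp only [divPow, map_mul, map_pow, hψ, hψq]

theorem delta_divPow (hq : (p : R) * q = 1) (φ : A →+* A) (ψ : R →+* R)
    (hψ : ∀ a, ψ (algebraMap A R a) = algebraMap A R (φ a)) {δ : R → R}
    (hδ : ∀ y, (p : R) * δ y = ψ y - y ^ p) (x : A) (m : ℕ) :
    δ (divPow p q x m) = q * divPow p q (φ x) m - divPow p q x (m + 1) := by
  have hψq : ψ q = q := by
    have h := congrArg ψ hq
    rw [map_mul, map_natCast, map_one] at h
    linear_combination q * h - ψ q * hq
  refine (IsUnit.of_mul_eq_one q hq).mul_left_cancel ?_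
  rw [hδ, map_divPow φ ψ hψ hψq, divPow_pow hq]
  linear_combination (-divPow p q (φ x) m) * hq

theorem mul_divPow_mem (hp : 2 ≤ p) (hq : (p : R) * q = 1) {T : Subalgebra A R} {x : A}
    (hx : q * divPow p q x 0 ∈ T) (m : ℕ) : q * divPow p q x m ∈ T := by
  induction m with
  | zero => exact hx
  | succ m ih =>
      rw [mul_divPow_succ hp hq]
      exact mul_mem (pow_mem (natCast_mem T p) _) (pow_mem ih p)

end DivPow

section FrobeniusLift

variable {A R : Type*} [CommRing A] [CommRing R] [Algebra A R] {p : ℕ} {q : R}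

theorem mul_divPow_frobenius_mem (hp : p.Prime) (hq : (p : R) * q = 1)
    {φ : A →+* A} {δA : A → A} (hδA : ∀ a, (p : A) * δA a = φ a - a ^ p)
    {I : Ideal A} (hφI : ∀ x ∈ I, φ x ∈ I) (hquot : ∀ a : A, (p : A) * a ∈ I → a ∈ I)
    {T : Subalgebra A R} (hT : ∀ x ∈ I, algebraMap A R x * q ∈ T) {x : A} (hx : x ∈ I)
    (m : ℕ) : q * divPow p q (φ x) m ∈ T := by
  refine mul_divPow_mem hp.two_le hq ?_ m
  have hδx : δA x ∈ I :=
    hquot _ (hδA x ▸ I.sub_mem (hφI x hx) (I.pow_mem_of_mem hx p hp.pos))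
  have hsplit : q * divPow p q (φ x) 0 =
      p ^ (p - 2) * (algebraMap A R x * q) ^ p + algebraMap A R (δA x) * q := by
    have hφx := congrArg (algebraMap A R) (hδA x)
    simp only [map_mul, map_sub, map_pow, map_natCast] at hφx
    obtain ⟨k, rfl⟩ : ∃ k, p = k + 2 := ⟨p - 2, by have := hp.two_le; omega⟩
    have hunit : ((k + 2 : ℕ) : R) ^ k * q ^ k = 1 := by rw [← mul_pow, hq, one_pow]
    rw [divPow_zero, Nat.add_sub_cancel]
    linear_combination (-(q ^ 2)) * hφx + (algebraMap A R (δA x) * q) * hq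
      - (algebraMap A R x ^ (k + 2) * q ^ 2) * hunit
  rw [hsplit]
  exact add_mem (mul_mem (pow_mem (natCast_mem T p) _) (pow_mem (hT x hx) p)) (hT _ hδx)

theorem delta_algebraMap_mem_range (hpu : IsUnit (p : R)) {φ : A →+* A} {δA : A → A}
    (hδA : ∀ a, (p : A) * δA a = φ a - a ^ p) {ψ : R →+* R}
    (hψ : ∀ a, ψ (algebraMap A R a) = algebraMap A R (φ a)) {δ : R → R}
    (hδ : ∀ y, (p : R) * δ y = ψ y - y ^ p) (a : A) :
    δ (algebraMap A R a) ∈ Set.range (algebraMap A R) := by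
  refine ⟨δA a, hpu.mul_left_cancel ?_⟩
  rw [hδ, hψ, ← map_natCast (algebraMap A R), ← map_mul, hδA, map_sub, map_pow]

theorem mapsTo_delta_adjoin_divPow (hp : p.Prime) (hq : (p : R) * q = 1)
    {φ : A →+* A} {δA : A → A} (hδA : ∀ a, (p : A) * δA a = φ a - a ^ p)
    {ψ : R →+* R} (hψ : ∀ a, ψ (algebraMap A R a) = algebraMap A R (φ a))
    {δ : R → R} (hδ : ∀ y, (p : R) * δ y = ψ y - y ^ p)
    {I : Ideal A} (hφI : ∀ x ∈ I, φ x ∈ I) (hquot : ∀ a : A, (p : A) * a ∈ I → a ∈ I) :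
    Set.MapsTo δ (Algebra.adjoin A {y | ∃ x ∈ I, ∃ m : ℕ, y = divPow p q x m})
      (Algebra.adjoin A {y | ∃ x ∈ I, ∃ m : ℕ, y = divPow p q x m}) := by
  have hpu : IsUnit (p : R) := .of_mul_eq_one q hq
  refine mapsTo_delta_adjoin ψ hp hpu hδ (delta_algebraMap_mem_range hpu hδA hψ hδ) ?_
  rintro _ ⟨x, hx, m, rfl⟩
  rw [delta_divPow hq φ ψ hψ hδ]
  refine sub_mem (mul_divPow_frobenius_mem hp hq hδA hφI hquot (fun x hx => ?_) hx m)
    (Algebra.subset_adjoin ⟨x, hx, m + 1, rfl⟩)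
  exact Algebra.subset_adjoin ⟨x, hx, 0, (divPow_zero x).symm⟩

theorem adjoin_iterate_delta_eq_adjoin_divPow (hp : p.Prime) (hq : (p : R) * q = 1)
    (φ : A →+* A) (δA : A → A) (hδA : ∀ a, (p : A) * δA a = φ a - a ^ p)
    (ψ : R →+* R) (hψ : ∀ a, ψ (algebraMap A R a) = algebraMap A R (φ a))
    (δ : R → R) (hδ : ∀ y, (p : R) * δ y = ψ y - y ^ p)
    (I : Ideal A) (hφI : ∀ x ∈ I, φ x ∈ I) (hquot : ∀ a : A, (p : A) * a ∈ I → a ∈ I) :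
    Algebra.adjoin A {y | ∃ x ∈ I ⊔ Ideal.span {(p : A)}, ∃ i : ℕ,
        y = δ^[i] (algebraMap A R x * q)} =
      Algebra.adjoin A {y | ∃ x ∈ I, ∃ m : ℕ, y = divPow p q x m} := by
  apply le_antisymm
  · refine Algebra.adjoin_le ?_
    rintro _ ⟨x, hx, i, rfl⟩
    refine (mapsTo_delta_adjoin_divPow hp hq hδA hψ hδ hφI hquot).iterate i ?_
    obtain ⟨a, ha, b, hb, rfl⟩ := Submodule.mem_sup.mp hx
    obtain ⟨c, rfl⟩ := Ideal.mem_span_singleton'.mp hb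
    have hsplit : algebraMap A R (a + c * p) * q = divPow p q a 0 + algebraMap A R c := by
      rw [divPow_zero, map_add, map_mul, map_natCast]
      linear_combination algebraMap A R c * hq
    rw [hsplit]
    exact add_mem (Algebra.subset_adjoin ⟨a, ha, 0, rfl⟩) (Subalgebra.algebraMap_mem _ c)
  · have hpu : IsUnit (p : R) := .of_mul_eq_one q hq
    have hB := mapsTo_delta_adjoin (A := A) ψ hp hpu hδ
      (delta_algebraMap_mem_range hpu hδA hψ hδ) (S := {y | ∃ x ∈ I ⊔ Ideal.span {(p : A)},
        ∃ i : ℕ, y = δ^[i] (algebraMap A R x * q)}) <| by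
      rintro _ ⟨x, hx, i, rfl⟩
      exact Algebra.subset_adjoin ⟨x, hx, i + 1, (Function.iterate_succ_apply' δ i _).symm⟩
    refine Algebra.adjoin_le ?_
    rintro _ ⟨x, hx, m, rfl⟩
    induction m with
    | zero => exact Algebra.subset_adjoin ⟨x, Ideal.mem_sup_left hx, 0, divPow_zero x⟩
    | succ m ih =>
        have hrec : divPow p q x (m + 1) = q * divPow p q (φ x) m - δ (divPow p q x m) := by
          rw [delta_divPow hq φ ψ hψ hδ]
          ring
        rw [hrec]
        refine sub_mem (mul_divPow_frobenius_mem hp hq hδA hφI hquot (fun x hx => ?_) hx m)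
          (hB ih)
        exact Algebra.subset_adjoin ⟨x, Ideal.mem_sup_left hx, 0, rfl⟩

end FrobeniusLift

theorem stmt10_general (p : ℕ) (hp : p.Prime) {A : Type*} [CommRing A]
    (φ : A →+* A) (δA : A → A)
    (hδA : ∀ a : A, (p : A) * δA a = φ a - a ^ p)
    (ψ : Localization.Away (p : A) →+* Localization.Away (p : A))
    (hψ : ∀ a : A, ψ (algebraMap A (Localization.Away (p : A)) a)
        = algebraMap A (Localization.Away (p : A)) (φ a))
    (δ : Localization.Away (p : A) → Localization.Away (p : A))
    (hδ : ∀ y : Localization.Away (p : A), (p : Localization.Away (p : A)) * δ y = ψ y - y ^ p)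
    (I : Ideal A) (hφI : ∀ x ∈ I, φ x ∈ I)
    (hquot : ∀ a : A, (p : A) * a ∈ I → a ∈ I) :
    Algebra.adjoin A {y : Localization.Away (p : A) | ∃ x ∈ I ⊔ Ideal.span {(p : A)}, ∃ i : ℕ,
        y = δ^[i] (algebraMap A (Localization.Away (p : A)) x *
          IsLocalization.Away.invSelf (S := Localization.Away (p : A)) (p : A))} =
      Algebra.adjoin A {y : Localization.Away (p : A) | ∃ x ∈ I, ∃ m : ℕ,
        y = (algebraMap A (Localization.Away (p : A)) x) ^ (p ^ m) *
          (IsLocalization.Away.invSelf (S := Localization.Away (p : A)) (p : A)) ^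
            (∑ j ∈ Finset.range (m + 1), p ^ j)} := by
  have hq : (p : Localization.Away (p : A)) *
      IsLocalization.Away.invSelf (S := Localization.Away (p : A)) (p : A) = 1 := by
    simpa using IsLocalization.Away.mul_invSelf (S := Localization.Away (p : A)) (p : A)
  exact adjoin_iterate_delta_eq_adjoin_divPow hp hq φ δA hδA ψ hψ δ hδ I hφI hquot

/-- Let `A` be a `p`-torsion-free commutative ring with a Frobenius lift
`φ` (with `δ`-operator `δA`), extended to `A[1/p]` as `ψ` with extended `δ`-operator `δ`.
Let `I ⊆ A` be an ideal with `φ(I) ⊆ I` and `A/I` `p`-torsion free. Then the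
`A`-subalgebra of `A[1/p]` generated by `{ δ^i(x/p) : x ∈ I + pA, i ≥ 0 }` equals the
`A`-subalgebra generated by `{ x^{p^m} / p^{1+p+⋯+p^m} : x ∈ I, m ≥ 0 }`. -/
theorem stmt10 (p : ℕ) (hp : p.Prime) {A : Type*} [CommRing A]
    (hA : Function.Injective fun a : A => (p : A) * a)
    (φ : A →+* A) (δA : A → A)
    (hδA : ∀ a : A, (p : A) * δA a = φ a - a ^ p)
    (ψ : Localization.Away (p : A) →+* Localization.Away (p : A))
    (hψ : ∀ a : A, ψ (algebraMap A (Localization.Away (p : A)) a)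
        = algebraMap A (Localization.Away (p : A)) (φ a))
    (δ : Localization.Away (p : A) → Localization.Away (p : A))
    (hδ : ∀ y : Localization.Away (p : A), (p : Localization.Away (p : A)) * δ y = ψ y - y ^ p)
    (I : Ideal A) (hφI : ∀ x ∈ I, φ x ∈ I)
    (hquot : ∀ a : A, (p : A) * a ∈ I → a ∈ I) :
    Algebra.adjoin A {y : Localization.Away (p : A) | ∃ x ∈ I ⊔ Ideal.span {(p : A)}, ∃ i : ℕ,
        y = δ^[i] (algebraMap A (Localization.Away (p : A)) x *
          IsLocalization.Away.invSelf (S := Localization.Away (p : A)) (p : A))} =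
      Algebra.adjoin A {y : Localization.Away (p : A) | ∃ x ∈ I, ∃ m : ℕ,
        y = (algebraMap A (Localization.Away (p : A)) x) ^ (p ^ m) *
          (IsLocalization.Away.invSelf (S := Localization.Away (p : A)) (p : A)) ^
            (∑ j ∈ Finset.range (m + 1), p ^ j)} :=
  stmt10_general p hp φ δA hδA ψ hψ δ hδ I hφI hquot
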